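/- Let H be a hyperbolic group with finite generating set A and word metric d_A, and let φ : H → H be an endomorphism. If there exists q₀ ≥ 0 such that for all u, v ∈ H, (u|v) = 0 implies (φ(u)|φ(v)) ≤ q₀, then the BRP holds for φ: for every p ≥ 0 there exists q ≥ 0 such that for all u, v ∈ H, (u|v) ≤ p implies (φ(u)|φ(v)) ≤ q. -/

import Mathlib

/-!
Given `(u|v) ≤ p`, the thin-triangle condition for the triangle `1, u, v` yields a point `w` on a
geodesic from `u` to `v` with `|w| ≤ (u|v) + 2δ + 1`: take the last point of that geodesic which is
`δ`-close to the side `[1, u]`; the next one is `δ`-close to `[v, 1]`. Translating by `w⁻¹`,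
`(w⁻¹u | w⁻¹v) = 0`, so `(φu | φv)_{φw} ≤ q₀`. Moving the base point back from `φw` to `1` costs at
most `|φw| ≤ M |w|`, where `M` bounds `|φa|` over the finitely many generators `a`.
-/

namespace Paper

variable {H : Type*} [Group H]

/-- `g` can be written as a product of `n` elements of `A ∪ A⁻¹`. -/
def WordWitness (A : Set H) (g : H) (n : ℕ) : Prop :=
  ∃ l : List H, l.length = n ∧ (∀ x ∈ l, x ∈ A ∨ x⁻¹ ∈ A) ∧ l.prod = g

/-- The word metric on `H` with respect to the generating set `A`. -/
noncomputable def wd (A : Set H) (g h : H) : ℕ :=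
  sInf {n | WordWitness A (g⁻¹ * h) n}

/-- The Gromov product `(u|v)_w` with respect to the word metric for `A`. -/
noncomputable def gp (A : Set H) (w u v : H) : ℝ :=
  ((wd A w u : ℝ) + (wd A w v : ℝ) - (wd A u v : ℝ)) / 2

/-- A discrete geodesic `γ : {0,…,n} → H` from `x` to `y` for the word metric of `A`. -/
def IsDiscreteGeodesic (A : Set H) (n : ℕ) (γ : ℕ → H) (x y : H) : Prop :=
  γ 0 = x ∧ γ n = y ∧
    ∀ i, i ≤ n → ∀ j, j ≤ n → (wd A (γ i) (γ j) : ℤ) = |(i : ℤ) - (j : ℤ)|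

/-- `H` is hyperbolic with respect to `A`: some `δ ≥ 0` satisfies the Rips thin-triangles
condition for discrete geodesics (all three sides are covered since `x, y, z` and the three
geodesics are universally quantified, and hence may be cyclically permuted). -/
def IsHyperbolic (A : Set H) : Prop :=
  ∃ δ : ℝ, 0 ≤ δ ∧ ∀ x y z : H, ∀ n₁ n₂ n₃ : ℕ, ∀ α β γ : ℕ → H,
    IsDiscreteGeodesic A n₁ α x y → IsDiscreteGeodesic A n₂ β y z →
    IsDiscreteGeodesic A n₃ γ z x → ∀ i, i ≤ n₁ →
      ∃ j, (j ≤ n₂ ∧ (wd A (α i) (β j) : ℝ) ≤ δ) ∨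
           (j ≤ n₃ ∧ (wd A (α i) (γ j) : ℝ) ≤ δ)

/-- The bounded reduction property for `φ`, in its Gromov-product formulation:
for every `p ≥ 0` there is `q ≥ 0` such that `(u|v) ≤ p` implies `(φ(u)|φ(v)) ≤ q`. -/
def BRP (A : Set H) (φ : H →* H) : Prop :=
  ∀ p : ℝ, 0 ≤ p → ∃ q : ℝ, 0 ≤ q ∧
    ∀ u v : H, gp A 1 u v ≤ p → gp A 1 (φ u) (φ v) ≤ q

namespace WordWitness

variable {A : Set H} {g h : H} {m n : ℕ}

lemma inv (hg : WordWitness A g n) : WordWitness A g⁻¹ n := by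
  obtain ⟨l, hl, hmem, rfl⟩ := hg
  refine ⟨(l.map (·⁻¹)).reverse, by simp [hl], ?_, (List.prod_inv_reverse l).symm⟩
  simp only [List.mem_reverse, List.mem_map]
  rintro _ ⟨x, hx, rfl⟩
  simpa [or_comm] using hmem x hx

lemma mul (hg : WordWitness A g m) (hh : WordWitness A h n) : WordWitness A (g * h) (m + n) := by
  obtain ⟨l₁, rfl, hmem₁, rfl⟩ := hg
  obtain ⟨l₂, rfl, hmem₂, rfl⟩ := hh
  refine ⟨l₁ ++ l₂, List.length_append, ?_, List.prod_append⟩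
  simp only [List.mem_append]
  rintro x (hx | hx)
  exacts [hmem₁ x hx, hmem₂ x hx]

end WordWitness

section WordMetric

variable {A : Set H}

lemma exists_wordWitness (hgen : Subgroup.closure A = ⊤) (g : H) : ∃ n, WordWitness A g n := by
  have hg : g ∈ (Subgroup.closure A).toSubmonoid := by simp [hgen]
  rw [Subgroup.closure_toSubmonoid] at hg
  obtain ⟨l, hmem, rfl⟩ := Submonoid.exists_list_of_mem_closure hg
  exact ⟨l.length, l, rfl, fun x hx => by simpa using hmem x hx, rfl⟩

lemma wd_le_of_wordWitness {g h : H} {n : ℕ} (hw : WordWitness A (g⁻¹ * h) n) :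
    wd A g h ≤ n :=
  Nat.sInf_le hw

lemma wordWitness_wd (hgen : Subgroup.closure A = ⊤) (g h : H) :
    WordWitness A (g⁻¹ * h) (wd A g h) :=
  Nat.sInf_mem (exists_wordWitness hgen _)

@[simp]
lemma wd_self (g : H) : wd A g g = 0 :=
  Nat.le_zero.mp (wd_le_of_wordWitness ⟨[], rfl, by simp, by simp⟩)

lemma wd_comm (g h : H) : wd A g h = wd A h g := by
  unfold wd
  congr 1
  ext n
  exact ⟨fun hw => by simpa using hw.inv, fun hw => by simpa using hw.inv⟩

@[simp]
lemma wd_mul_left (a g h : H) : wd A (a * g) (a * h) = wd A g h := by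
  simp only [wd, mul_inv_rev, mul_assoc, inv_mul_cancel_left]

lemma wd_triangle (hgen : Subgroup.closure A = ⊤) (g h k : H) :
    wd A g k ≤ wd A g h + wd A h k :=
  wd_le_of_wordWitness <| by
    simpa [mul_assoc] using (wordWitness_wd hgen g h).mul (wordWitness_wd hgen h k)

lemma wd_one_mul_le (hgen : Subgroup.closure A = ⊤) (g h : H) :
    wd A 1 (g * h) ≤ wd A 1 g + wd A 1 h := by
  have hshift := wd_mul_left (A := A) g 1 h
  rw [mul_one] at hshift
  simpa [hshift] using wd_triangle hgen 1 g (g * h)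

lemma wd_one_inv (g : H) : wd A 1 g⁻¹ = wd A 1 g := by
  simpa [wd_comm] using wd_mul_left (A := A) g⁻¹ 1 g

lemma exists_wd_one_map_le (hA : A.Finite) (hgen : Subgroup.closure A = ⊤) (φ : H →* H) :
    ∃ M : ℕ, ∀ g, wd A 1 (φ g) ≤ M * wd A 1 g := by
  classical
  let M := hA.toFinset.sup fun a => wd A 1 (φ a)
  have hgens : ∀ x, x ∈ A ∨ x⁻¹ ∈ A → wd A 1 (φ x) ≤ M := by
    rintro x (hx | hx)
    · exact Finset.le_sup (f := fun a => wd A 1 (φ a)) (hA.mem_toFinset.mpr hx)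
    · rw [← wd_one_inv, ← map_inv]
      exact Finset.le_sup (f := fun a => wd A 1 (φ a)) (hA.mem_toFinset.mpr hx)
  refine ⟨M, fun g => ?_⟩
  obtain ⟨l, hlen, hmem, hprod⟩ := wordWitness_wd hgen 1 g
  rw [inv_one, one_mul] at hprod
  subst hprod
  rw [← hlen]
  clear hlen
  induction l with
  | nil => simp
  | cons x l ih =>
    simp only [List.prod_cons, map_mul, List.length_cons, List.mem_cons, forall_eq_or_imp] at hmem ⊢
    calc wd A 1 (φ x * φ l.prod) ≤ wd A 1 (φ x) + wd A 1 (φ l.prod) := wd_one_mul_le hgen _ _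
      _ ≤ M + M * l.length := add_le_add (hgens x hmem.1) (ih hmem.2)
      _ = M * (l.length + 1) := by ring

end WordMetric

section GromovProduct

variable {A : Set H}

lemma gp_mul_left (a w u v : H) : gp A (a * w) (a * u) (a * v) = gp A w u v := by
  simp only [gp, wd_mul_left]

lemma gp_one_inv_mul (a u v : H) : gp A 1 (a⁻¹ * u) (a⁻¹ * v) = gp A a u v := by
  simpa using gp_mul_left (A := A) a⁻¹ a u v

lemma gp_one_le_gp_add_wd (hgen : Subgroup.closure A = ⊤) (w u v : H) :
    gp A 1 u v ≤ gp A w u v + wd A 1 w := by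
  have hu : (wd A 1 u : ℝ) ≤ wd A 1 w + wd A w u := by exact_mod_cast wd_triangle hgen 1 w u
  have hv : (wd A 1 v : ℝ) ≤ wd A 1 w + wd A w v := by exact_mod_cast wd_triangle hgen 1 w v
  unfold gp
  linarith

end GromovProduct

namespace IsDiscreteGeodesic

variable {A : Set H} {n : ℕ} {γ : ℕ → H} {x y : H}

lemma wd_eq (hγ : IsDiscreteGeodesic A n γ x y) {i j : ℕ} (hij : i ≤ j) (hj : j ≤ n) :
    wd A (γ i) (γ j) = j - i := by
  have h := hγ.2.2 i (hij.trans hj) j hj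
  rw [abs_sub_comm, abs_of_nonneg (by omega)] at h
  omega

lemma wd_add_wd (hγ : IsDiscreteGeodesic A n γ x y) {i : ℕ} (hi : i ≤ n) :
    wd A x (γ i) + wd A (γ i) y = wd A x y := by
  have h₁ := hγ.wd_eq (Nat.zero_le i) hi
  have h₂ := hγ.wd_eq hi le_rfl
  have h₃ := hγ.wd_eq (Nat.zero_le n) le_rfl
  rw [hγ.1] at h₁ h₃
  rw [hγ.2.1] at h₂ h₃
  omega

lemma gp_eq_zero (hγ : IsDiscreteGeodesic A n γ x y) {i : ℕ} (hi : i ≤ n) :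
    gp A (γ i) x y = 0 := by
  have h : (wd A x (γ i) : ℝ) + wd A (γ i) y = wd A x y := by exact_mod_cast hγ.wd_add_wd hi
  rw [gp, wd_comm (γ i) x]
  linarith

lemma wd_add_wd_le_of_wd_le (hgen : Subgroup.closure A = ⊤) (hγ : IsDiscreteGeodesic A n γ x y)
    {j : ℕ} (hj : j ≤ n) {z : H} {δ : ℝ} (hz : (wd A z (γ j) : ℝ) ≤ δ) :
    (wd A x z : ℝ) + wd A z y ≤ wd A x y + 2 * δ := by
  have h : (wd A x (γ j) : ℝ) + wd A (γ j) y = wd A x y := by exact_mod_cast hγ.wd_add_wd hj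
  have h₁ : (wd A x z : ℝ) ≤ wd A x (γ j) + wd A (γ j) z := by
    exact_mod_cast wd_triangle hgen x (γ j) z
  have h₂ : (wd A z y : ℝ) ≤ wd A z (γ j) + wd A (γ j) y := by
    exact_mod_cast wd_triangle hgen z (γ j) y
  rw [wd_comm (γ j) z] at h₁
  linarith

end IsDiscreteGeodesic

section Geodesics

variable {A : Set H}

lemma isDiscreteGeodesic_of_wd_le (hgen : Subgroup.closure A = ⊤) {n : ℕ} {γ : ℕ → H} {x y : H}
    (h₀ : γ 0 = x) (hn : γ n = y) (hxy : wd A x y = n)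
    (hle : ∀ i j, i ≤ j → j ≤ n → wd A (γ i) (γ j) ≤ j - i) :
    IsDiscreteGeodesic A n γ x y := by
  have heq : ∀ i j, i ≤ j → j ≤ n → wd A (γ i) (γ j) = j - i := by
    intro i j hij hj
    have hx := hle 0 i (Nat.zero_le i) (hij.trans hj)
    have hy := hle j n hj le_rfl
    have hxi := wd_triangle hgen x (γ i) (γ j)
    have hxj := wd_triangle hgen x (γ j) y
    rw [h₀] at hx
    rw [hn] at hy
    have := hle i j hij hj
    omega
  refine ⟨h₀, hn, fun i hi j hj => ?_⟩
  rcases le_total i j with hij | hji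
  · rw [heq i j hij hj, abs_sub_comm, abs_of_nonneg (by omega)]
    omega
  · rw [wd_comm, heq j i hji hi, abs_of_nonneg (by omega)]
    omega

lemma exists_isDiscreteGeodesic (hgen : Subgroup.closure A = ⊤) (x y : H) :
    ∃ γ : ℕ → H, IsDiscreteGeodesic A (wd A x y) γ x y := by
  obtain ⟨l, hlen, hmem, hprod⟩ := wordWitness_wd hgen x y
  refine ⟨_, isDiscreteGeodesic_of_wd_le hgen (γ := fun i => x * (l.take i).prod) (x := x) (y := y)
    (by simp) ?_ rfl ?_⟩
  · simp [← hlen, hprod]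
  · intro i j hij hj
    have hsplit : l.take j = l.take i ++ (l.drop i).take (j - i) := by
      rw [← List.take_add, Nat.add_sub_cancel' hij]
    refine wd_le_of_wordWitness ⟨(l.drop i).take (j - i), ?_, ?_, ?_⟩
    · simp only [List.length_take, List.length_drop, hlen]
      omega
    · exact fun z hz => hmem z (List.mem_of_mem_drop (List.mem_of_mem_take hz))
    · simp [hsplit, mul_assoc]

end Geodesics

/-- The Rips condition of `IsHyperbolic` for a fixed `δ`, so that `IsHyperbolic A` unfolds to
`∃ δ, 0 ≤ δ ∧ ThinTriangles A δ`. -/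
def ThinTriangles (A : Set H) (δ : ℝ) : Prop :=
  ∀ x y z : H, ∀ n₁ n₂ n₃ : ℕ, ∀ α β γ : ℕ → H,
    IsDiscreteGeodesic A n₁ α x y → IsDiscreteGeodesic A n₂ β y z →
    IsDiscreteGeodesic A n₃ γ z x → ∀ i, i ≤ n₁ →
      ∃ j, (j ≤ n₂ ∧ (wd A (α i) (β j) : ℝ) ≤ δ) ∨
           (j ≤ n₃ ∧ (wd A (α i) (γ j) : ℝ) ≤ δ)

namespace ThinTriangles

variable {A : Set H} {δ : ℝ}

/-- Walking along the side `α` of a thin triangle, the last point that is `δ`-close to the side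
`γ` is followed by a point `δ`-close to the side `β`. -/
lemma exists_switch (hthin : ThinTriangles A δ) (hδ : 0 ≤ δ) {x y z : H} {n₁ n₂ n₃ : ℕ}
    {α β γ : ℕ → H} (hα : IsDiscreteGeodesic A n₁ α x y) (hβ : IsDiscreteGeodesic A n₂ β y z)
    (hγ : IsDiscreteGeodesic A n₃ γ z x) :
    ∃ i ≤ n₁, (∃ j ≤ n₃, (wd A (α i) (γ j) : ℝ) ≤ δ) ∧
      (i = n₁ ∨ i < n₁ ∧ ∃ j ≤ n₂, (wd A (α (i + 1)) (β j) : ℝ) ≤ δ) := by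
  classical
  let P i := ∃ j ≤ n₃, (wd A (α i) (γ j) : ℝ) ≤ δ
  have hP₀ : P 0 := ⟨n₃, le_rfl, by simpa [hα.1, hγ.2.1] using hδ⟩
  refine ⟨Nat.findGreatest P n₁, Nat.findGreatest_le n₁, Nat.findGreatest_spec (Nat.zero_le _) hP₀,
    ?_⟩
  rcases (Nat.findGreatest_le (P := P) n₁).eq_or_lt with heq | hlt
  · exact Or.inl heq
  refine Or.inr ⟨hlt, ?_⟩
  have hnot : ¬ P (Nat.findGreatest P n₁ + 1) :=
    Nat.findGreatest_is_greatest (Nat.lt_succ_self _) hlt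
  obtain ⟨j, ⟨hj, hβj⟩ | ⟨hj, hγj⟩⟩ := hthin x y z n₁ n₂ n₃ α β γ hα hβ hγ _ hlt
  · exact ⟨j, hj, hβj⟩
  · exact absurd ⟨j, hj, hγj⟩ hnot

/-- `gp A w u v = 0` says that `w` lies on a geodesic from `u` to `v`. -/
lemma exists_gp_eq_zero_wd_one_le (hthin : ThinTriangles A δ) (hδ : 0 ≤ δ)
    (hgen : Subgroup.closure A = ⊤) (u v : H) :
    ∃ w, gp A w u v = 0 ∧ (wd A 1 w : ℝ) ≤ gp A 1 u v + 2 * δ + 1 := by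
  obtain ⟨α, hα⟩ := exists_isDiscreteGeodesic hgen u v
  obtain ⟨β, hβ⟩ := exists_isDiscreteGeodesic hgen v 1
  obtain ⟨γ, hγ⟩ := exists_isDiscreteGeodesic hgen 1 u
  obtain ⟨i, hi, ⟨j, hj, hαγ⟩, hnext⟩ := hthin.exists_switch hδ hα hβ hγ
  refine ⟨α i, hα.gp_eq_zero hi, ?_⟩
  have hnear_u := hγ.wd_add_wd_le_of_wd_le hgen hj hαγ
  have hnear_v : (wd A v (α i) : ℝ) + wd A (α i) 1 ≤ wd A v 1 + 2 * δ + 2 := by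
    rcases hnext with rfl | ⟨hlt, j, hj, hαβ⟩
    · simp only [hα.2.1, wd_self, CharP.cast_eq_zero, zero_add]
      linarith
    · have hstep : (wd A (α i) (α (i + 1)) : ℝ) = 1 := by
        simp [hα.wd_eq (Nat.le_succ i) hlt]
      have h₁ : (wd A v (α i) : ℝ) ≤ wd A v (α (i + 1)) + wd A (α (i + 1)) (α i) := by
        exact_mod_cast wd_triangle hgen _ _ _
      have h₂ : (wd A (α i) 1 : ℝ) ≤ wd A (α i) (α (i + 1)) + wd A (α (i + 1)) 1 := by
        exact_mod_cast wd_triangle hgen _ _ _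
      rw [wd_comm (α (i + 1))] at h₁
      linarith [hβ.wd_add_wd_le_of_wd_le hgen hj hαβ]
  have hmid : (wd A u (α i) : ℝ) + wd A (α i) v = wd A u v := by exact_mod_cast hα.wd_add_wd hi
  rw [wd_comm (α i) u] at hnear_u
  rw [wd_comm v, wd_comm (α i) 1, wd_comm v] at hnear_v
  unfold gp
  linarith

end ThinTriangles

/-- If the BRP holds for `φ` for `p = 0`, then it holds for every `p`. -/
theorem brp_of_brp_zero
    (A : Set H) (hA : A.Finite) (hgen : Subgroup.closure A = ⊤)
    (hhyp : IsHyperbolic A) (φ : H →* H)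
    (h0 : ∃ q₀ : ℝ, 0 ≤ q₀ ∧ ∀ u v : H, gp A 1 u v = 0 → gp A 1 (φ u) (φ v) ≤ q₀) :
    BRP A φ := by
  obtain ⟨q₀, hq₀, hq⟩ := h0
  obtain ⟨δ, hδ, hthin⟩ := hhyp
  obtain ⟨M, hM⟩ := exists_wd_one_map_le hA hgen φ
  intro p hp
  refine ⟨q₀ + M * (p + 2 * δ + 1), by positivity, fun u v huv => ?_⟩
  obtain ⟨w, hw₀, hw₁⟩ := ThinTriangles.exists_gp_eq_zero_wd_one_le hthin hδ hgen u v
  have hφw : gp A (φ w) (φ u) (φ v) ≤ q₀ := by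
    have := hq (w⁻¹ * u) (w⁻¹ * v) (by rw [gp_one_inv_mul, hw₀])
    rwa [map_mul, map_mul, map_inv, gp_one_inv_mul] at this
  have hlip : (wd A 1 (φ w) : ℝ) ≤ M * (p + 2 * δ + 1) :=
    calc (wd A 1 (φ w) : ℝ) ≤ M * wd A 1 w := by exact_mod_cast hM w
      _ ≤ M * (p + 2 * δ + 1) := by gcongr; linarith
  linarith [gp_one_le_gp_add_wd hgen (φ w) (φ u) (φ v)]

end Paper
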